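/- arXiv:1811.10706 — 3 statements merged into one kernel-verified Lean document; each statement's English description precedes it below -/
import Mathlib

section
/- Assume f satisfies the Lipschitz condition (H₁): there exists a constant L > 0 such that |f(t,x) − f(t,y)| ≤ L|x − y| for all t ∈ [0,1] and all x, y ∈ ℝ. If L·Θ < 1, then the operator 𝒜 has a unique fixed point in C([0,1],ℝ); that is, there exists a unique continuous function x : [0,1] → ℝ with x(t) = (𝒜x)(t) for all t ∈ [0,1] (equivalently, the fractional boundary value problem (1.1)–(1.2), whose solutions are by definition the fixed points of 𝒜, has a unique solution on [0,1]). -/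
open MeasureTheory intervalIntegral

noncomputable def Δ₁ (σ ν ξ : ℝ) (n : ℕ) (η α : ℕ → ℝ) : ℝ :=
  ξ ^ (1 - σ) * Real.Gamma (2 - ν) -
    Real.Gamma (2 - σ) * ∑ i ∈ Finset.Icc 1 n, α i * η i ^ (1 - ν)

noncomputable def Δ₂ (n : ℕ) (η β γ : ℕ → ℝ) : ℝ :=
  1 - ∑ i ∈ Finset.Icc 1 n, (β i * η i + γ i)

noncomputable def Δ₃ (n : ℕ) (η β γ : ℕ → ℝ) : ℝ :=
  -2 + ∑ i ∈ Finset.Icc 1 n, η i * (β i * η i + 2 * γ i)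

/-- The operator 𝒜 of the paper, acting on (the continuous extension of) a
continuous function on `[0,1]`. -/
noncomputable def opA (q σ ν ξ : ℝ) (n : ℕ) (η α β γ : ℕ → ℝ)
    (f : ℝ → ℝ → ℝ) (x : ℝ → ℝ) (t : ℝ) : ℝ :=
  (∫ s in (0:ℝ)..t, (t - s) ^ (q - 1) / Real.Gamma q * f s (x s)) +
  (1 / Δ₂ n η β γ) *
    (-(∫ s in (0:ℝ)..1, (1 - s) ^ (q - 1) / Real.Gamma q * f s (x s)) +
     (∑ i ∈ Finset.Icc 1 n, β i *
        ∫ s in (0:ℝ)..η i, (η i - s) ^ q / Real.Gamma (q + 1) * f s (x s)) +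
     ∑ i ∈ Finset.Icc 1 n, γ i *
        ∫ s in (0:ℝ)..η i, (η i - s) ^ (q - 1) / Real.Gamma q * f s (x s)) +
  Real.Gamma (2 - σ) * Real.Gamma (2 - ν) * (Δ₃ n η β γ + 2 * Δ₂ n η β γ * t) /
      (2 * Δ₁ σ ν ξ n η α * Δ₂ n η β γ) *
    (-(∫ s in (0:ℝ)..ξ, (ξ - s) ^ (q - σ - 1) / Real.Gamma (q - σ) * f s (x s)) +
     ∑ i ∈ Finset.Icc 1 n, α i *
        ∫ s in (0:ℝ)..η i, (η i - s) ^ (q - ν - 1) / Real.Gamma (q - ν) * f s (x s))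

noncomputable def Θ (q σ ν ξ : ℝ) (n : ℕ) (η α β γ : ℕ → ℝ) : ℝ :=
  1 / Real.Gamma (q + 1) +
  1 / (|Δ₂ n η β γ| * Real.Gamma (q + 2)) *
    (1 + q + ∑ i ∈ Finset.Icc 1 n, η i ^ q * (η i * |β i| + (q + 1) * |γ i|)) +
  Real.Gamma (2 - σ) * Real.Gamma (2 - ν) * (|Δ₃ n η β γ| + 2 * |Δ₂ n η β γ|) /
      (2 * |Δ₁ σ ν ξ n η α * Δ₂ n η β γ|) *
    (ξ ^ (q - σ) / Real.Gamma (q - σ + 1) +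
     ∑ i ∈ Finset.Icc 1 n, |α i| * η i ^ (q - ν) / Real.Gamma (q - ν + 1))

/-!
Writing `g(s) = f(s, x(s))`, the operator is `𝒜x = G g`, where `G` is a fixed linear combination
of Riemann–Liouville integrals `I^p g(c) = ∫₀^c (c-s)^(p-1)/Γ(p) g(s) ds` with `p > 0` and
`c ∈ [0,1]`. Since `|I^p g(c)| ≤ c^p/Γ(p+1) · sup|g|`, one gets `|G g(t)| ≤ Θ · sup|g|` on `[0,1]`,
so by the Lipschitz condition `𝒜` is a contraction of `C([0,1], ℝ)` with constant `LΘ < 1`,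
and the Banach fixed-point theorem applies.
-/

open Set

/-- The Riemann–Liouville fractional integral `(I^p g)(c)` with base point `0`. -/
noncomputable def rlIntegral (p : ℝ) (g : ℝ → ℝ) (c : ℝ) : ℝ :=
  ∫ s in (0:ℝ)..c, (c - s) ^ (p - 1) / Real.Gamma p * g s

section RiemannLiouville

variable {p c M : ℝ} {g g₁ g₂ : ℝ → ℝ}

lemma intervalIntegrable_rlKernel (hp : 0 < p) :
    IntervalIntegrable (fun s => (c - s) ^ (p - 1) / Real.Gamma p) volume 0 c := by
  have h := ((intervalIntegrable_rpow' (a := 0) (b := c) (r := p - 1) (by linarith)).comp_sub_left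
    c).symm
  simpa using h.div_const (Real.Gamma p)

lemma integral_rlKernel (hp : 0 < p) :
    ∫ s in (0:ℝ)..c, (c - s) ^ (p - 1) / Real.Gamma p = c ^ p / Real.Gamma (p + 1) := by
  rw [intervalIntegral.integral_div, integral_comp_sub_left (fun u => u ^ (p - 1)),
    sub_self, sub_zero, integral_rpow (Or.inl (by linarith)), sub_add_cancel,
    Real.zero_rpow hp.ne', sub_zero, Real.Gamma_add_one hp.ne', div_div]

lemma rlIntegral_sub (hp : 0 < p) (hc : 0 ≤ c) (hg₁ : ContinuousOn g₁ (Icc 0 c))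
    (hg₂ : ContinuousOn g₂ (Icc 0 c)) :
    rlIntegral p (fun s => g₁ s - g₂ s) c = rlIntegral p g₁ c - rlIntegral p g₂ c := by
  rw [← uIcc_of_le hc] at hg₁ hg₂
  simp only [rlIntegral, mul_sub]
  exact intervalIntegral.integral_sub ((intervalIntegrable_rlKernel hp).mul_continuousOn hg₁)
    ((intervalIntegrable_rlKernel hp).mul_continuousOn hg₂)

lemma abs_rlIntegral_le (hp : 0 < p) (hc : 0 ≤ c) (hg : ∀ s ∈ Icc 0 c, |g s| ≤ M) :
    |rlIntegral p g c| ≤ M * c ^ p / Real.Gamma (p + 1) := by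
  have hΓ := Real.Gamma_pos_of_pos hp
  calc |rlIntegral p g c| = ‖∫ s in (0:ℝ)..c, (c - s) ^ (p - 1) / Real.Gamma p * g s‖ := rfl
    _ ≤ ∫ s in (0:ℝ)..c, (c - s) ^ (p - 1) / Real.Gamma p * M :=
        norm_integral_le_of_norm_le hc (ae_of_all _ fun s hs => by
          have hk : 0 ≤ (c - s) ^ (p - 1) / Real.Gamma p :=
            div_nonneg (Real.rpow_nonneg (by linarith [hs.2]) _) hΓ.le
          rw [norm_mul, Real.norm_of_nonneg hk]
          exact mul_le_mul_of_nonneg_left (hg s (Ioc_subset_Icc_self hs)) hk)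
          ((intervalIntegrable_rlKernel hp).mul_const M)
    _ = M * c ^ p / Real.Gamma (p + 1) := by
        rw [intervalIntegral.integral_mul_const, integral_rlKernel hp]; ring

lemma abs_rlIntegral_le_div_Gamma (hp : 0 < p) (hc : c ∈ Icc 0 1)
    (hg : ∀ s ∈ Icc 0 1, |g s| ≤ M) : |rlIntegral p g c| ≤ M / Real.Gamma (p + 1) := by
  have hM : 0 ≤ M := (abs_nonneg _).trans (hg 0 ⟨le_rfl, zero_le_one⟩)
  refine (abs_rlIntegral_le hp hc.1 fun s hs => hg s ⟨hs.1, hs.2.trans hc.2⟩).trans ?_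
  gcongr
  exact mul_le_of_le_one_right hM (Real.rpow_le_one hc.1 hc.2 hp.le)

lemma abs_sum_mul_rlIntegral_le {ι : Type*} {I : Finset ι} {a η : ι → ℝ} (hp : 0 < p)
    (hη : ∀ i ∈ I, η i ∈ Icc 0 1) (hg : ∀ s ∈ Icc 0 1, |g s| ≤ M) :
    |∑ i ∈ I, a i * rlIntegral p g (η i)| ≤
      M * ∑ i ∈ I, |a i| * η i ^ p / Real.Gamma (p + 1) := by
  rw [Finset.mul_sum]
  refine (Finset.abs_sum_le_sum_abs _ _).trans (Finset.sum_le_sum fun i hi => ?_)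
  have h := abs_rlIntegral_le hp (hη i hi).1 fun s hs => hg s ⟨hs.1, hs.2.trans (hη i hi).2⟩
  calc |a i * rlIntegral p g (η i)| ≤ |a i| * (M * η i ^ p / Real.Gamma (p + 1)) := by
        rw [abs_mul]; exact mul_le_mul_of_nonneg_left h (abs_nonneg _)
    _ = M * (|a i| * η i ^ p / Real.Gamma (p + 1)) := by ring

lemma continuous_rlIntegral (hp : 1 ≤ p) (hg : Continuous g) : Continuous (rlIntegral p g) := by
  have hk : Continuous fun u : ℝ => u ^ (p - 1) := Real.continuous_rpow_const (by linarith)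
  exact continuous_parametric_intervalIntegral_of_continuous
    (((hk.comp (continuous_fst.sub continuous_snd)).div_const _).mul (hg.comp continuous_snd))
    continuous_id

end RiemannLiouville

lemma abs_mul_affine_div_le {k a b d₁ d₂ t : ℝ} (hk : 0 ≤ k) (ht : t ∈ Icc (0:ℝ) 1) :
    |k * (a + 2 * b * t) / (2 * d₁ * d₂)| ≤ k * (|a| + 2 * |b|) / (2 * |d₁ * d₂|) := by
  have hnum : |a + 2 * b * t| ≤ |a| + 2 * |b| := calc
    |a + 2 * b * t| ≤ |a| + 2 * |b| * |t| := by
      refine (abs_add_le _ _).trans_eq ?_; rw [abs_mul, abs_mul, abs_two]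
    _ ≤ |a| + 2 * |b| := by
      have : |t| ≤ 1 := abs_le.2 ⟨by linarith [ht.1], ht.2⟩
      nlinarith [abs_nonneg b]
  have hden : |2 * d₁ * d₂| = 2 * |d₁ * d₂| := by rw [mul_assoc, abs_mul, abs_two]
  rw [abs_div, abs_mul, abs_of_nonneg hk, hden]
  gcongr

lemma inv_Gamma_add_sum_eq {ι : Type*} {I : Finset ι} {q : ℝ} {b c η : ι → ℝ} (hq : 0 < q)
    (hη : ∀ i ∈ I, 0 ≤ η i) :
    1 / Real.Gamma (q + 1) + ∑ i ∈ I, b i * η i ^ (q + 1) / Real.Gamma (q + 1 + 1) +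
        ∑ i ∈ I, c i * η i ^ q / Real.Gamma (q + 1) =
      (1 + q + ∑ i ∈ I, η i ^ q * (η i * b i + (q + 1) * c i)) / Real.Gamma (q + 2) := by
  have hΓ : 0 < Real.Gamma (q + 1) := Real.Gamma_pos_of_pos (by linarith)
  have hΓ₂ : Real.Gamma (q + 2) = (q + 1) * Real.Gamma (q + 1) := by
    rw [show q + 2 = q + 1 + 1 by ring, Real.Gamma_add_one (by linarith)]
  have hterm : ∀ i ∈ I, b i * η i ^ (q + 1) / Real.Gamma (q + 2) * Real.Gamma (q + 2) +
      c i * η i ^ q / Real.Gamma (q + 1) * Real.Gamma (q + 2) =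
        η i ^ q * (η i * b i + (q + 1) * c i) := fun i hi => by
    rw [hΓ₂, Real.rpow_add_one' (hη i hi) (by linarith)]
    field_simp
  rw [show q + 1 + 1 = q + 2 by ring, eq_div_iff (by rw [hΓ₂]; positivity), add_mul, add_mul,
    Finset.sum_mul, Finset.sum_mul, add_assoc, ← Finset.sum_add_distrib, Finset.sum_congr rfl hterm,
    hΓ₂]
  field_simp
  ring

section GreenOperator

variable (q σ ν ξ : ℝ) (n : ℕ) (η α β γ : ℕ → ℝ)

/-- The solution operator `G` of the linear problem with right-hand side `g`. -/
noncomputable def greenOp (g : ℝ → ℝ) (t : ℝ) : ℝ :=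
  rlIntegral q g t +
  1 / Δ₂ n η β γ *
    (-rlIntegral q g 1 + ∑ i ∈ Finset.Icc 1 n, β i * rlIntegral (q + 1) g (η i) +
      ∑ i ∈ Finset.Icc 1 n, γ i * rlIntegral q g (η i)) +
  Real.Gamma (2 - σ) * Real.Gamma (2 - ν) * (Δ₃ n η β γ + 2 * Δ₂ n η β γ * t) /
      (2 * Δ₁ σ ν ξ n η α * Δ₂ n η β γ) *
    (-rlIntegral (q - σ) g ξ + ∑ i ∈ Finset.Icc 1 n, α i * rlIntegral (q - ν) g (η i))

lemma opA_eq_greenOp (f : ℝ → ℝ → ℝ) (x : ℝ → ℝ) (t : ℝ) :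
    opA q σ ν ξ n η α β γ f x t = greenOp q σ ν ξ n η α β γ (fun s => f s (x s)) t := by
  simp only [opA, greenOp, rlIntegral, add_sub_cancel_right]

variable {q σ ν ξ n η α β γ} {g g₁ g₂ : ℝ → ℝ} {t M : ℝ}

lemma continuous_greenOp (hq : 1 < q) (hg : Continuous g) :
    Continuous (greenOp q σ ν ξ n η α β γ g) := by
  have := continuous_rlIntegral hq.le hg
  unfold greenOp
  fun_prop

lemma greenOp_sub (hq : 1 < q) (hσ : σ ≤ 1) (hν : ν ≤ 1) (hξ : ξ ∈ Icc 0 1)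
    (hη : ∀ i ∈ Finset.Icc 1 n, η i ∈ Icc 0 1) (ht : t ∈ Icc 0 1)
    (hg₁ : ContinuousOn g₁ (Icc 0 1)) (hg₂ : ContinuousOn g₂ (Icc 0 1)) :
    greenOp q σ ν ξ n η α β γ (fun s => g₁ s - g₂ s) t =
      greenOp q σ ν ξ n η α β γ g₁ t - greenOp q σ ν ξ n η α β γ g₂ t := by
  have hsub : ∀ p c, 0 < p → c ∈ Icc (0:ℝ) 1 →
      rlIntegral p (fun s => g₁ s - g₂ s) c = rlIntegral p g₁ c - rlIntegral p g₂ c :=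
    fun p c hp hc => rlIntegral_sub hp hc.1 (hg₁.mono (Icc_subset_Icc_right hc.2))
      (hg₂.mono (Icc_subset_Icc_right hc.2))
  have hsum : ∀ p (a : ℕ → ℝ), 0 < p →
      ∑ i ∈ Finset.Icc 1 n, a i * rlIntegral p (fun s => g₁ s - g₂ s) (η i) =
        ∑ i ∈ Finset.Icc 1 n, a i * rlIntegral p g₁ (η i) -
          ∑ i ∈ Finset.Icc 1 n, a i * rlIntegral p g₂ (η i) := fun p a hp => by
    rw [← Finset.sum_sub_distrib]
    exact Finset.sum_congr rfl fun i hi => by rw [hsub p _ hp (hη i hi), mul_sub]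
  simp only [greenOp]
  rw [hsub q t (by linarith) ht, hsub q 1 (by linarith) ⟨zero_le_one, le_rfl⟩,
    hsub (q - σ) ξ (by linarith) hξ, hsum (q + 1) β (by linarith), hsum q γ (by linarith),
    hsum (q - ν) α (by linarith)]
  ring

lemma abs_greenOp_le (hq : 1 < q) (hσ : σ ≤ 1) (hν : ν ≤ 1) (hξ : ξ ∈ Icc 0 1)
    (hη : ∀ i ∈ Finset.Icc 1 n, η i ∈ Icc 0 1) (ht : t ∈ Icc 0 1)
    (hg : ∀ s ∈ Icc 0 1, |g s| ≤ M) :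
    |greenOp q σ ν ξ n η α β γ g t| ≤ M * Θ q σ ν ξ n η α β γ := by
  have hcoef := abs_mul_affine_div_le (a := Δ₃ n η β γ) (b := Δ₂ n η β γ) (d₁ := Δ₁ σ ν ξ n η α)
    (d₂ := Δ₂ n η β γ) (mul_nonneg (Real.Gamma_pos_of_pos (by linarith : (0:ℝ) < 2 - σ)).le
      (Real.Gamma_pos_of_pos (by linarith : (0:ℝ) < 2 - ν)).le) ht
  have hmid := inv_Gamma_add_sum_eq (I := Finset.Icc 1 n) (b := fun i => |β i|)
    (c := fun i => |γ i|) (by linarith : 0 < q) fun i hi => (hη i hi).1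
  unfold greenOp
  calc _ ≤ _ := abs_add_three _ _ _
    _ ≤ M / Real.Gamma (q + 1) +
        1 / |Δ₂ n η β γ| * (M / Real.Gamma (q + 1) +
          M * ∑ i ∈ Finset.Icc 1 n, |β i| * η i ^ (q + 1) / Real.Gamma (q + 1 + 1) +
          M * ∑ i ∈ Finset.Icc 1 n, |γ i| * η i ^ q / Real.Gamma (q + 1)) +
        Real.Gamma (2 - σ) * Real.Gamma (2 - ν) * (|Δ₃ n η β γ| + 2 * |Δ₂ n η β γ|) /
            (2 * |Δ₁ σ ν ξ n η α * Δ₂ n η β γ|) *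
          (M * ξ ^ (q - σ) / Real.Gamma (q - σ + 1) +
            M * ∑ i ∈ Finset.Icc 1 n, |α i| * η i ^ (q - ν) / Real.Gamma (q - ν + 1)) := by
      rw [abs_mul, abs_mul, abs_div, abs_one]
      gcongr
      · exact abs_rlIntegral_le_div_Gamma (by linarith) ht hg
      · refine (abs_add_three _ _ _).trans ?_
        rw [abs_neg]
        gcongr
        · exact abs_rlIntegral_le_div_Gamma (by linarith) ⟨zero_le_one, le_rfl⟩ hg
        · exact abs_sum_mul_rlIntegral_le (by linarith) hη hg
        · exact abs_sum_mul_rlIntegral_le (by linarith) hη hg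
      · exact (abs_nonneg _).trans hcoef
      · refine (abs_add_le _ _).trans ?_
        rw [abs_neg]
        gcongr
        · exact abs_rlIntegral_le (by linarith) hξ.1 fun s hs => hg s ⟨hs.1, hs.2.trans hξ.2⟩
        · exact abs_sum_mul_rlIntegral_le (by linarith) hη hg
    _ = M * Θ q σ ν ξ n η α β γ := by
      unfold Θ
      linear_combination M / |Δ₂ n η β γ| * hmid

lemma greenOp_congr (hq : 1 < q) (hσ : σ ≤ 1) (hν : ν ≤ 1) (hξ : ξ ∈ Icc 0 1)
    (hη : ∀ i ∈ Finset.Icc 1 n, η i ∈ Icc 0 1) (ht : t ∈ Icc 0 1)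
    (hg₁ : ContinuousOn g₁ (Icc 0 1)) (hg₂ : ContinuousOn g₂ (Icc 0 1))
    (h : EqOn g₁ g₂ (Icc 0 1)) :
    greenOp q σ ν ξ n η α β γ g₁ t = greenOp q σ ν ξ n η α β γ g₂ t := by
  have h0 := abs_greenOp_le (α := α) (β := β) (γ := γ) (g := fun s => g₁ s - g₂ s) (M := 0)
    hq hσ hν hξ hη ht fun s hs => by simp [h hs]
  rw [greenOp_sub hq hσ hν hξ hη ht hg₁ hg₂, zero_mul] at h0
  exact sub_eq_zero.1 (abs_nonpos_iff.1 h0)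

end GreenOperator

lemma nodes_mem_Icc {ξ : ℝ} {n : ℕ} {η : ℕ → ℝ} (hn : 1 ≤ n) (hξ : 0 < ξ) (hξη : ξ < η 1)
    (hηmono : ∀ i, 1 ≤ i → i < n → η i < η (i + 1)) (hηn : η n < 1) :
    ξ ∈ Icc 0 1 ∧ ∀ i ∈ Finset.Icc 1 n, η i ∈ Icc 0 1 := by
  have hmono : MonotoneOn η (Icc 1 n) := monotoneOn_of_le_succ ordConnected_Icc
    fun i _ hi hi' => by
      rw [Order.succ_eq_add_one] at hi' ⊢
      exact (hηmono i hi.1 hi'.2).le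
  have hη : ∀ i ∈ Finset.Icc 1 n, ξ < η i ∧ η i < 1 := fun i hi => by
    rw [Finset.mem_Icc] at hi
    exact ⟨hξη.trans_le (hmono ⟨le_rfl, hn⟩ hi hi.1), (hmono hi ⟨hn, le_rfl⟩ hi.2).trans_lt hηn⟩
  have hηn' := hη n (Finset.mem_Icc.2 ⟨hn, le_rfl⟩)
  exact ⟨⟨hξ.le, (hηn'.1.trans hηn'.2).le⟩,
    fun i hi => ⟨(hξ.trans (hη i hi).1).le, (hη i hi).2.le⟩⟩

section FixedPoint

variable {q σ ν ξ : ℝ} {n : ℕ} {η α β γ : ℕ → ℝ} {f : ℝ → ℝ → ℝ}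

lemma continuousOn_apply_IccExtend (hf : ContinuousOn (Function.uncurry f) (Icc 0 1 ×ˢ univ))
    (x : C(Icc (0:ℝ) 1, ℝ)) :
    ContinuousOn (fun s => f s (IccExtend zero_le_one x s)) (Icc 0 1) :=
  hf.comp (continuousOn_id.prodMk x.continuous.Icc_extend'.continuousOn) fun _ hs => ⟨hs, trivial⟩

lemma continuous_opA_IccExtend (hq : 1 < q) (hσ : σ ≤ 1) (hν : ν ≤ 1) (hξ : ξ ∈ Icc 0 1)
    (hη : ∀ i ∈ Finset.Icc 1 n, η i ∈ Icc 0 1)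
    (hf : ContinuousOn (Function.uncurry f) (Icc 0 1 ×ˢ univ)) (x : C(Icc (0:ℝ) 1, ℝ)) :
    Continuous fun t : Icc (0:ℝ) 1 => opA q σ ν ξ n η α β γ f (IccExtend zero_le_one x) t := by
  -- `f` is only continuous on `[0,1] × ℝ`, so first push the time variable into `[0,1]`
  set g : ℝ → ℝ := fun s => f (projIcc 0 1 zero_le_one s) (IccExtend zero_le_one x s)
  have hproj : Continuous fun s => (projIcc (0:ℝ) 1 zero_le_one s : ℝ) :=
    continuous_subtype_val.comp continuous_projIcc
  have hg : Continuous g := hf.comp_continuous (hproj.prodMk x.continuous.Icc_extend')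
    fun s => ⟨(projIcc 0 1 zero_le_one s).2, trivial⟩
  have hG : Continuous (greenOp q σ ν ξ n η α β γ g) := continuous_greenOp hq hg
  refine (hG.comp continuous_subtype_val).congr fun t => ?_
  rw [opA_eq_greenOp]
  refine greenOp_congr hq hσ hν hξ hη t.2 hg.continuousOn (continuousOn_apply_IccExtend hf x)
    fun s hs => ?_
  simp only [g, projIcc_of_mem zero_le_one hs]

lemma abs_opA_IccExtend_sub_le (hq : 1 < q) (hσ : σ ≤ 1) (hν : ν ≤ 1) (hξ : ξ ∈ Icc 0 1)
    (hη : ∀ i ∈ Finset.Icc 1 n, η i ∈ Icc 0 1)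
    (hf : ContinuousOn (Function.uncurry f) (Icc 0 1 ×ˢ univ)) {L : ℝ} (hL : 0 ≤ L)
    (hLip : ∀ t ∈ Icc (0:ℝ) 1, ∀ x y : ℝ, |f t x - f t y| ≤ L * |x - y|)
    (x y : C(Icc (0:ℝ) 1, ℝ)) (t : Icc (0:ℝ) 1) :
    |opA q σ ν ξ n η α β γ f (IccExtend zero_le_one x) t -
        opA q σ ν ξ n η α β γ f (IccExtend zero_le_one y) t| ≤
      L * Θ q σ ν ξ n η α β γ * dist x y := by
  rw [opA_eq_greenOp, opA_eq_greenOp, ← greenOp_sub hq hσ hν hξ hη t.2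
    (continuousOn_apply_IccExtend hf x) (continuousOn_apply_IccExtend hf y), mul_right_comm]
  refine abs_greenOp_le hq hσ hν hξ hη t.2 fun s hs => (hLip s hs _ _).trans ?_
  rw [IccExtend_of_mem _ _ hs, IccExtend_of_mem _ _ hs, ← Real.dist_eq]
  exact mul_le_mul_of_nonneg_left (ContinuousMap.dist_apply_le_dist _) hL

end FixedPoint

theorem thm31_general (q σ ν ξ : ℝ) (n : ℕ) (η α β γ : ℕ → ℝ)
    (hq1 : 1 < q) (hσ1 : σ ≤ 1) (hν1 : ν ≤ 1)
    (hn : 1 ≤ n) (hξ : 0 < ξ) (hξη : ξ < η 1)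
    (hηmono : ∀ i, 1 ≤ i → i < n → η i < η (i + 1)) (hηn : η n < 1)
    (f : ℝ → ℝ → ℝ)
    (hf : ContinuousOn (Function.uncurry f) (Set.Icc 0 1 ×ˢ Set.univ))
    (L : ℝ) (hL : 0 < L)
    (hLip : ∀ t ∈ Set.Icc (0:ℝ) 1, ∀ x y : ℝ, |f t x - f t y| ≤ L * |x - y|)
    (hLΘ : L * Θ q σ ν ξ n η α β γ < 1) :
    ∃! x : C(Set.Icc (0:ℝ) 1, ℝ), ∀ t : Set.Icc (0:ℝ) 1,
      x t = opA q σ ν ξ n η α β γ f (Set.IccExtend zero_le_one ⇑x) ↑t := by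
  obtain ⟨hξ01, hη01⟩ := nodes_mem_Icc hn hξ hξη hηmono hηn
  let T : C(Icc (0:ℝ) 1, ℝ) → C(Icc (0:ℝ) 1, ℝ) := fun x =>
    ⟨fun t => opA q σ ν ξ n η α β γ f (IccExtend zero_le_one x) t,
      continuous_opA_IccExtend hq1 hσ1 hν1 hξ01 hη01 hf x⟩
  have hT : ContractingWith (L * Θ q σ ν ξ n η α β γ).toNNReal T :=
    ⟨Real.toNNReal_lt_one.2 hLΘ, LipschitzWith.of_dist_le' fun x y =>
      ContinuousMap.dist_le_iff_of_nonempty.2 fun t =>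
        abs_opA_IccExtend_sub_le hq1 hσ1 hν1 hξ01 hη01 hf hL.le hLip x y t⟩
  refine ⟨ContractingWith.fixedPoint T hT, fun t => ?_, fun y hy => ?_⟩
  · exact (DFunLike.congr_fun (ContractingWith.fixedPoint_isFixedPt hT) t).symm
  · exact hT.fixedPoint_unique (ContinuousMap.ext fun t => (hy t).symm)

theorem thm31 (q σ ν ξ : ℝ) (n : ℕ) (η α β γ : ℕ → ℝ)
    (hq1 : 1 < q) (hq2 : q ≤ 2) (hσ0 : 0 < σ) (hσ1 : σ ≤ 1) (hν0 : 0 < ν) (hν1 : ν ≤ 1)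
    (hn : 1 ≤ n) (hξ : 0 < ξ) (hξη : ξ < η 1)
    (hηmono : ∀ i, 1 ≤ i → i < n → η i < η (i + 1)) (hηn : η n < 1)
    (hΔ₁ : Δ₁ σ ν ξ n η α ≠ 0) (hΔ₂ : Δ₂ n η β γ ≠ 0)
    (f : ℝ → ℝ → ℝ)
    (hf : ContinuousOn (Function.uncurry f) (Set.Icc 0 1 ×ˢ Set.univ))
    (L : ℝ) (hL : 0 < L)
    (hLip : ∀ t ∈ Set.Icc (0:ℝ) 1, ∀ x y : ℝ, |f t x - f t y| ≤ L * |x - y|)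
    (hLΘ : L * Θ q σ ν ξ n η α β γ < 1) :
    ∃! x : C(Set.Icc (0:ℝ) 1, ℝ), ∀ t : Set.Icc (0:ℝ) 1,
      x t = opA q σ ν ξ n η α β γ f (Set.IccExtend zero_le_one ⇑x) ↑t :=
  thm31_general q σ ν ξ n η α β γ hq1 hσ1 hν1 hn hξ hξη hηmono hηn f hf L hL hLip hLΘ
end

section
/- Assume f satisfies (H₁): there exists a constant L > 0 such that |f(t,x) − f(t,y)| ≤ L|x − y| for all t ∈ [0,1] and all x, y ∈ ℝ, and assume L·Θ < 1. Let M = sup_{t∈[0,1]} |f(t,0)| and let ρ > 0 satisfy ρ ≥ Θ·M·(1 − Θ·L)^{−1}. Then for every x ∈ C([0,1],ℝ) with ‖x‖ ≤ ρ one has ‖𝒜x‖ ≤ ρ; that is, 𝒜 maps the closed ball B_ρ = {x ∈ C([0,1],ℝ) : ‖x‖ ≤ ρ} into itself. -/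
open MeasureTheory intervalIntegral

/-! Every term of `𝒜x` is a Riemann–Liouville integral
`I^p g (b) = ∫₀ᵇ (b - s)^(p-1) / Γ(p) g(s) ds` of `g(s) = f(s, x(s))` at a point `b ∈ [0,1]`,
and `|I^p g (b)| ≤ C b^p / Γ(p+1)` whenever `|g| ≤ C`. On the ball of radius `ρ` the Lipschitz
condition gives `|g| ≤ M + Lρ`, so adding up the term bounds yields `|𝒜x(t)| ≤ (M + Lρ) Θ`, and the
choice of `ρ` says precisely that `(M + Lρ) Θ ≤ ρ`. -/

open Set Real

noncomputable def riemannLiouville (p b : ℝ) (g : ℝ → ℝ) : ℝ :=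
  ∫ s in (0:ℝ)..b, (b - s) ^ (p - 1) / Gamma p * g s

theorem integral_sub_rpow {b r : ℝ} (hr : -1 < r) :
    ∫ s in (0:ℝ)..b, (b - s) ^ r = b ^ (r + 1) / (r + 1) := by
  rw [intervalIntegral.integral_comp_sub_left (fun x => x ^ r) b, sub_self, sub_zero,
    integral_rpow (Or.inl hr), zero_rpow (by linarith), sub_zero]

theorem abs_riemannLiouville_le {p b C : ℝ} {g : ℝ → ℝ} (hp : 0 < p) (hb : 0 ≤ b)
    (hg : ContinuousOn g (Icc 0 b)) (hgC : ∀ s ∈ Icc 0 b, |g s| ≤ C) :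
    |riemannLiouville p b g| ≤ C * b ^ p / Gamma (p + 1) := by
  have hΓ : 0 < Gamma p := Gamma_pos_of_pos hp
  have hker : IntervalIntegrable (fun s => (b - s) ^ (p - 1)) volume 0 b := by
    simpa using ((intervalIntegral.intervalIntegrable_rpow' (a := 0) (b := b)
      (by linarith : -1 < p - 1)).comp_sub_left b).symm
  have hint : IntervalIntegrable (fun s => (b - s) ^ (p - 1) / Gamma p * g s) volume 0 b :=
    (hker.div_const _).mul_continuousOn (by rwa [uIcc_of_le hb])
  calc |riemannLiouville p b g|
      ≤ ∫ s in (0:ℝ)..b, |(b - s) ^ (p - 1) / Gamma p * g s| :=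
        intervalIntegral.abs_integral_le_integral_abs hb
    _ ≤ ∫ s in (0:ℝ)..b, (b - s) ^ (p - 1) * (C / Gamma p) := by
        refine intervalIntegral.integral_mono_on hb hint.abs (hker.mul_const _) fun s hs => ?_
        have hbs : 0 ≤ b - s := by linarith [hs.2]
        rw [abs_mul, abs_div, abs_of_nonneg (rpow_nonneg hbs _), abs_of_pos hΓ, div_mul_eq_mul_div,
          mul_div_assoc]
        gcongr
        exact hgC s hs
    _ = C * b ^ p / Gamma (p + 1) := by
        rw [intervalIntegral.integral_mul_const, integral_sub_rpow (by linarith),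
          sub_add_cancel, Gamma_add_one hp.ne']
        field_simp

theorem opA_eq_riemannLiouville (q σ ν ξ : ℝ) (n : ℕ) (η α β γ : ℕ → ℝ) (f : ℝ → ℝ → ℝ)
    (x : ℝ → ℝ) (t : ℝ) :
    opA q σ ν ξ n η α β γ f x t =
      riemannLiouville q t (fun s => f s (x s)) +
      1 / Δ₂ n η β γ *
        (-riemannLiouville q 1 (fun s => f s (x s)) +
          ∑ i ∈ Finset.Icc 1 n, β i * riemannLiouville (q + 1) (η i) (fun s => f s (x s)) +
          ∑ i ∈ Finset.Icc 1 n, γ i * riemannLiouville q (η i) (fun s => f s (x s))) +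
      Gamma (2 - σ) * Gamma (2 - ν) * (Δ₃ n η β γ + 2 * Δ₂ n η β γ * t) /
          (2 * Δ₁ σ ν ξ n η α * Δ₂ n η β γ) *
        (-riemannLiouville (q - σ) ξ (fun s => f s (x s)) +
          ∑ i ∈ Finset.Icc 1 n, α i * riemannLiouville (q - ν) (η i) (fun s => f s (x s))) := by
  simp only [opA, riemannLiouville, add_sub_cancel_right]

theorem abs_sum_mul_le {ι : Type*} (s : Finset ι) (a x y : ι → ℝ)
    (hxy : ∀ i ∈ s, |x i| ≤ y i) : |∑ i ∈ s, a i * x i| ≤ ∑ i ∈ s, |a i| * y i :=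
  (Finset.abs_sum_le_sum_abs _ _).trans <| Finset.sum_le_sum fun i hi => by
    rw [abs_mul]; exact mul_le_mul_of_nonneg_left (hxy i hi) (abs_nonneg _)

section Bounds

variable {q σ ν ξ t C : ℝ} {n : ℕ} {η α β γ : ℕ → ℝ} {g : ℝ → ℝ}

theorem abs_riemannLiouville_le_of_mem_Icc {p b : ℝ} (hp : 0 < p) (hb : b ∈ Icc (0:ℝ) 1)
    (hg : ContinuousOn g (Icc 0 1)) (hgC : ∀ s ∈ Icc (0:ℝ) 1, |g s| ≤ C) :
    |riemannLiouville p b g| ≤ C * b ^ p / Gamma (p + 1) :=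
  abs_riemannLiouville_le hp hb.1 (hg.mono (Icc_subset_Icc_right hb.2))
    fun s hs => hgC s (Icc_subset_Icc_right hb.2 hs)

theorem abs_bracket_Δ₂_le (hq : 0 < q) (hη : ∀ i ∈ Finset.Icc 1 n, η i ∈ Icc (0:ℝ) 1)
    (hg : ContinuousOn g (Icc 0 1)) (hgC : ∀ s ∈ Icc (0:ℝ) 1, |g s| ≤ C) :
    |-riemannLiouville q 1 g + ∑ i ∈ Finset.Icc 1 n, β i * riemannLiouville (q + 1) (η i) g +
        ∑ i ∈ Finset.Icc 1 n, γ i * riemannLiouville q (η i) g| ≤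
      C * ((1 + q + ∑ i ∈ Finset.Icc 1 n, η i ^ q * (η i * |β i| + (q + 1) * |γ i|)) /
        Gamma (q + 2)) := by
  have hΓ : Gamma (q + 2) = (q + 1) * (q * Gamma q) := by
    rw [show q + 2 = q + 1 + 1 by ring, Gamma_add_one (by positivity), Gamma_add_one hq.ne']
  have hΓq := Gamma_pos_of_pos hq
  have hone := abs_riemannLiouville_le_of_mem_Icc hq (right_mem_Icc.2 zero_le_one) hg hgC
  have hβ := abs_sum_mul_le _ β _ _ fun i hi =>
    abs_riemannLiouville_le_of_mem_Icc (p := q + 1) (by positivity) (hη i hi) hg hgC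
  have hγ := abs_sum_mul_le _ γ _ _ fun i hi =>
    abs_riemannLiouville_le_of_mem_Icc hq (hη i hi) hg hgC
  have hsum : ∀ i ∈ Finset.Icc 1 n,
      |β i| * (C * η i ^ (q + 1) / Gamma (q + 1 + 1)) + |γ i| * (C * η i ^ q / Gamma (q + 1)) =
        C * (η i ^ q * (η i * |β i| + (q + 1) * |γ i|)) / Gamma (q + 2) := by
    intro i hi
    rw [rpow_add' (hη i hi).1 (by positivity), rpow_one, add_assoc, one_add_one_eq_two, hΓ,
      Gamma_add_one hq.ne']
    field_simp
  calc _ ≤ |riemannLiouville q 1 g| +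
          |∑ i ∈ Finset.Icc 1 n, β i * riemannLiouville (q + 1) (η i) g| +
          |∑ i ∈ Finset.Icc 1 n, γ i * riemannLiouville q (η i) g| := by
        refine (abs_add_le _ _).trans (add_le_add_left ((abs_add_le _ _).trans ?_) _)
        rw [abs_neg]
    _ ≤ C * 1 ^ q / Gamma (q + 1) +
          ∑ i ∈ Finset.Icc 1 n, |β i| * (C * η i ^ (q + 1) / Gamma (q + 1 + 1)) +
          ∑ i ∈ Finset.Icc 1 n, |γ i| * (C * η i ^ q / Gamma (q + 1)) := by gcongr
    _ = _ := by
        rw [add_assoc, ← Finset.sum_add_distrib, Finset.sum_congr rfl hsum, ← Finset.sum_div,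
          ← Finset.mul_sum, one_rpow, hΓ, Gamma_add_one hq.ne']
        field_simp
        ring

theorem abs_bracket_Δ₁_le (hσq : σ < q) (hνq : ν < q) (hξ : ξ ∈ Icc (0:ℝ) 1)
    (hη : ∀ i ∈ Finset.Icc 1 n, η i ∈ Icc (0:ℝ) 1)
    (hg : ContinuousOn g (Icc 0 1)) (hgC : ∀ s ∈ Icc (0:ℝ) 1, |g s| ≤ C) :
    |-riemannLiouville (q - σ) ξ g +
        ∑ i ∈ Finset.Icc 1 n, α i * riemannLiouville (q - ν) (η i) g| ≤
      C * (ξ ^ (q - σ) / Gamma (q - σ + 1) +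
        ∑ i ∈ Finset.Icc 1 n, |α i| * η i ^ (q - ν) / Gamma (q - ν + 1)) := by
  have hξI := abs_riemannLiouville_le_of_mem_Icc (sub_pos.2 hσq) hξ hg hgC
  have hα := abs_sum_mul_le _ α _ _ fun i hi =>
    abs_riemannLiouville_le_of_mem_Icc (sub_pos.2 hνq) (hη i hi) hg hgC
  calc _ ≤ |riemannLiouville (q - σ) ξ g| +
          |∑ i ∈ Finset.Icc 1 n, α i * riemannLiouville (q - ν) (η i) g| := by
        rw [← abs_neg (riemannLiouville _ _ _)]; exact abs_add_le _ _
    _ ≤ C * ξ ^ (q - σ) / Gamma (q - σ + 1) +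
          ∑ i ∈ Finset.Icc 1 n, |α i| * (C * η i ^ (q - ν) / Gamma (q - ν + 1)) := by gcongr
    _ = _ := by
        rw [mul_add, Finset.mul_sum]
        congr 1
        · ring
        · exact Finset.sum_congr rfl fun i _ => by ring

theorem abs_mul_add_mul_div_le {a d e m₁ m₂ t : ℝ} (ha : 0 ≤ a) (ht : t ∈ Icc (0:ℝ) 1) :
    |a * (d + 2 * e * t) / (2 * m₁ * m₂)| ≤ a * (|d| + 2 * |e|) / (2 * |m₁ * m₂|) := by
  have hnum : |d + 2 * e * t| ≤ |d| + 2 * |e| := by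
    calc |d + 2 * e * t| ≤ |d| + 2 * |e| * |t| := by
          simpa [abs_mul] using abs_add_le d (2 * e * t)
      _ ≤ |d| + 2 * |e| * 1 := by
          gcongr; rw [abs_of_nonneg ht.1]; exact ht.2
      _ = |d| + 2 * |e| := by ring
  rw [mul_assoc 2 m₁, abs_div, abs_mul, abs_mul 2, abs_of_nonneg ha, abs_two]
  gcongr

theorem abs_opA_le (hq : 0 < q) (hσq : σ < q) (hνq : ν < q) (hσ : σ < 2) (hν : ν < 2)
    (ht : t ∈ Icc (0:ℝ) 1) (hξ : ξ ∈ Icc (0:ℝ) 1) (hη : ∀ i ∈ Finset.Icc 1 n, η i ∈ Icc (0:ℝ) 1)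
    {f : ℝ → ℝ → ℝ} {x : ℝ → ℝ} (hg : ContinuousOn (fun s => f s (x s)) (Icc 0 1))
    (hgC : ∀ s ∈ Icc (0:ℝ) 1, |f s (x s)| ≤ C) :
    |opA q σ ν ξ n η α β γ f x t| ≤ C * Θ q σ ν ξ n η α β γ := by
  have hΓ : 0 ≤ Gamma (2 - σ) * Gamma (2 - ν) :=
    mul_nonneg (Gamma_pos_of_pos (by linarith)).le (Gamma_pos_of_pos (by linarith)).le
  have h₁ := abs_riemannLiouville_le_of_mem_Icc hq ht hg hgC
  have h₂ := abs_bracket_Δ₂_le (β := β) (γ := γ) hq hη hg hgC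
  have h₃ := abs_bracket_Δ₁_le (α := α) hσq hνq hξ hη hg hgC
  have hcoeff := abs_mul_add_mul_div_le (d := Δ₃ n η β γ) (e := Δ₂ n η β γ)
    (m₁ := Δ₁ σ ν ξ n η α) (m₂ := Δ₂ n η β γ) hΓ ht
  rw [opA_eq_riemannLiouville]
  calc _ ≤ _ := (abs_add_le _ _).trans (add_le_add_left (abs_add_le _ _) _)
    _ ≤ C * t ^ q / Gamma (q + 1) + 1 / |Δ₂ n η β γ| * (C * ((1 + q +
          ∑ i ∈ Finset.Icc 1 n, η i ^ q * (η i * |β i| + (q + 1) * |γ i|)) / Gamma (q + 2))) +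
        Gamma (2 - σ) * Gamma (2 - ν) * (|Δ₃ n η β γ| + 2 * |Δ₂ n η β γ|) /
          (2 * |Δ₁ σ ν ξ n η α * Δ₂ n η β γ|) * (C * (ξ ^ (q - σ) / Gamma (q - σ + 1) +
            ∑ i ∈ Finset.Icc 1 n, |α i| * η i ^ (q - ν) / Gamma (q - ν + 1))) := by
        refine add_le_add (add_le_add h₁ ?_) ?_
        · rw [abs_mul, abs_div, abs_one]
          gcongr
        · rw [abs_mul]
          exact mul_le_mul hcoeff h₃ (abs_nonneg _) ((abs_nonneg _).trans hcoeff)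
    _ ≤ _ := by
        have hC : 0 ≤ C := (abs_nonneg _).trans (hgC 0 (left_mem_Icc.2 zero_le_one))
        have ht : C * t ^ q / Gamma (q + 1) ≤ C * (1 / Gamma (q + 1)) := by
          rw [mul_one_div]
          gcongr
          exact mul_le_of_le_one_right hC (rpow_le_one ht.1 ht.2 hq.le)
        refine (add_le_add (add_le_add ht le_rfl) le_rfl).trans (le_of_eq ?_)
        rw [Θ]
        ring

end Bounds

theorem ContinuousOn.uncurry_comp_prodMk {α β γ : Type*} [TopologicalSpace α]
    [TopologicalSpace β] [TopologicalSpace γ] {f : α → β → γ} {s : Set α}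
    (hf : ContinuousOn (Function.uncurry f) (s ×ˢ univ)) {y : α → β} (hy : Continuous y) :
    ContinuousOn (fun t => f t (y t)) s :=
  hf.comp (continuous_id.prodMk hy).continuousOn fun _ ht => ⟨ht, trivial⟩

theorem mem_Icc_of_lt_add_one {η : ℕ → ℝ} {n : ℕ}
    (h : ∀ i, 1 ≤ i → i < n → η i < η (i + 1)) :
    ∀ i ∈ Finset.Icc 1 n, η i ∈ Icc (η 1) (η n) := by
  have hmono : MonotoneOn η (Icc 1 n) :=
    monotoneOn_of_le_add_one ordConnected_Icc fun i _ hi hi1 => (h i hi.1 hi1.2).le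
  intro i hi
  rw [Finset.mem_Icc] at hi
  exact ⟨hmono ⟨le_rfl, hi.1.trans hi.2⟩ hi hi.1, hmono hi ⟨hi.1.trans hi.2, le_rfl⟩ hi.2⟩

theorem add_mul_mul_le_of_mul_mul_inv_le {θ M L ρ : ℝ} (hLθ : L * θ < 1)
    (h : θ * M * (1 - θ * L)⁻¹ ≤ ρ) : (M + L * ρ) * θ ≤ ρ := by
  have h' := (mul_inv_le_iff₀ (by linarith [mul_comm θ L])).1 h
  linear_combination h'

theorem thm31_invariance_general (q σ ν ξ : ℝ) (n : ℕ) (η α β γ : ℕ → ℝ)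
    (hq1 : 1 < q) (hσ1 : σ ≤ 1) (hν1 : ν ≤ 1)
    (hn : 1 ≤ n) (hξ : 0 < ξ) (hξη : ξ < η 1)
    (hηmono : ∀ i, 1 ≤ i → i < n → η i < η (i + 1)) (hηn : η n < 1)
    (f : ℝ → ℝ → ℝ)
    (hf : ContinuousOn (Function.uncurry f) (Set.Icc 0 1 ×ˢ Set.univ))
    (L : ℝ) (hL : 0 < L)
    (hLip : ∀ t ∈ Set.Icc (0:ℝ) 1, ∀ x y : ℝ, |f t x - f t y| ≤ L * |x - y|)
    (hLΘ : L * Θ q σ ν ξ n η α β γ < 1)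
    (M : ℝ) (hM : M = sSup ((fun t => |f t 0|) '' Set.Icc (0:ℝ) 1))
    (ρ : ℝ)
    (hρ : Θ q σ ν ξ n η α β γ * M * (1 - Θ q σ ν ξ n η α β γ * L)⁻¹ ≤ ρ) :
    ∀ x : C(Set.Icc (0:ℝ) 1, ℝ), ‖x‖ ≤ ρ →
      ∀ t ∈ Set.Icc (0:ℝ) 1,
        |opA q σ ν ξ n η α β γ f (Set.IccExtend zero_le_one ⇑x) t| ≤ ρ := by
  intro x hx t ht
  set y := IccExtend zero_le_one ⇑x
  have hy : ∀ s, |y s| ≤ ρ := fun s => (x.norm_coe_le_norm _).trans hx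
  have hη : ∀ i ∈ Finset.Icc 1 n, η i ∈ Icc (0:ℝ) 1 := fun i hi => by
    have := mem_Icc_of_lt_add_one hηmono i hi
    constructor <;> linarith [this.1, this.2]
  have hξ1 : ξ ∈ Icc (0:ℝ) 1 := ⟨hξ.le, by linarith [(hη 1 (by simp [hn])).2]⟩
  have hM' : ∀ s ∈ Icc (0:ℝ) 1, |f s 0| ≤ M := fun s hs => hM ▸ le_csSup
    (isCompact_Icc.image_of_continuousOn (hf.uncurry_comp_prodMk continuous_const).abs).bddAbove
    ⟨s, hs, rfl⟩
  have hgC : ∀ s ∈ Icc (0:ℝ) 1, |f s (y s)| ≤ M + L * ρ := fun s hs => by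
    have hLy := hLip s hs (y s) 0
    rw [sub_zero] at hLy
    linarith [abs_sub_abs_le_abs_sub (f s (y s)) (f s 0), hM' s hs,
      mul_le_mul_of_nonneg_left (hy s) hL.le]
  calc _ ≤ (M + L * ρ) * Θ q σ ν ξ n η α β γ :=
        abs_opA_le (by linarith) (by linarith) (by linarith) (by linarith) (by linarith) ht hξ1
          hη (hf.uncurry_comp_prodMk x.continuous.Icc_extend') hgC
    _ ≤ ρ := add_mul_mul_le_of_mul_mul_inv_le hLΘ hρ

theorem thm31_invariance (q σ ν ξ : ℝ) (n : ℕ) (η α β γ : ℕ → ℝ)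
    (hq1 : 1 < q) (hq2 : q ≤ 2) (hσ0 : 0 < σ) (hσ1 : σ ≤ 1) (hν0 : 0 < ν) (hν1 : ν ≤ 1)
    (hn : 1 ≤ n) (hξ : 0 < ξ) (hξη : ξ < η 1)
    (hηmono : ∀ i, 1 ≤ i → i < n → η i < η (i + 1)) (hηn : η n < 1)
    (hΔ₁ : Δ₁ σ ν ξ n η α ≠ 0) (hΔ₂ : Δ₂ n η β γ ≠ 0)
    (f : ℝ → ℝ → ℝ)
    (hf : ContinuousOn (Function.uncurry f) (Set.Icc 0 1 ×ˢ Set.univ))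
    (L : ℝ) (hL : 0 < L)
    (hLip : ∀ t ∈ Set.Icc (0:ℝ) 1, ∀ x y : ℝ, |f t x - f t y| ≤ L * |x - y|)
    (hLΘ : L * Θ q σ ν ξ n η α β γ < 1)
    (M : ℝ) (hM : M = sSup ((fun t => |f t 0|) '' Set.Icc (0:ℝ) 1))
    (ρ : ℝ) (hρ0 : 0 < ρ)
    (hρ : Θ q σ ν ξ n η α β γ * M * (1 - Θ q σ ν ξ n η α β γ * L)⁻¹ ≤ ρ) :
    ∀ x : C(Set.Icc (0:ℝ) 1, ℝ), ‖x‖ ≤ ρ →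
      ∀ t ∈ Set.Icc (0:ℝ) 1,
        |opA q σ ν ξ n η α β γ f (Set.IccExtend zero_le_one ⇑x) t| ≤ ρ :=
  thm31_invariance_general q σ ν ξ n η α β γ hq1 hσ1 hν1 hn hξ hξη hηmono hηn f hf L hL hLip hLΘ M
    hM ρ hρ
end

section
/- Assume f satisfies (H₂): |f(t,x) − f(t,y)| ≤ g(t)·Φ^{−1}·ln(1 + |x − y|) for all t ∈ [0,1] and all x, y ∈ ℝ. Then the operator 𝒜 has a unique fixed point in C([0,1],ℝ); that is, there exists a unique continuous function x : [0,1] → ℝ with x(t) = (𝒜x)(t) for all t ∈ [0,1] (equivalently, the fractional boundary value problem (1.1)–(1.2), whose solutions are by definition the fixed points of 𝒜, has a unique solution on [0,1]). -/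
/-!
The operator `𝒜` is `L ∘ N`, where `N x = f(·, x(·))` is the Nemytskii operator and `L = opL` the
solution operator of the linear problem: a combination of fractional integrals
`∫₀ᶜ (c - s)^p / D · h(s) ds` with nonnegative kernels. By (H₂), `|N x - N y| ≤ K g` on `[0,1]`
with `K = Φ⁻¹ log (1 + ‖x - y‖)`, and bounding `|h|` by `K g` inside each of these integrals gives
`|L h t| ≤ K Φ`, so `‖𝒜x - 𝒜y‖ ≤ log (1 + ‖x - y‖)`. Since `r ↦ log (1 + r)` is monotone,
continuous and `< r` for `r > 0`, the Boyd–Wong argument on the complete space `C([0,1], ℝ)` gives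
a unique fixed point: the steps of the iterates tend to `0`, which forces them to be Cauchy.
-/

open MeasureTheory intervalIntegral

noncomputable def Φ (q σ ν ξ : ℝ) (n : ℕ) (η α β γ : ℕ → ℝ) (g : ℝ → ℝ) : ℝ :=
  (1 + 1 / |Δ₂ n η β γ|) * (∫ s in (0:ℝ)..1, (1 - s) ^ (q - 1) / Real.Gamma q * g s) +
  (1 / |Δ₂ n η β γ|) * (∑ i ∈ Finset.Icc 1 n,
    ∫ s in (0:ℝ)..η i, (η i - s) ^ (q - 1) / Real.Gamma (q + 1) *
      (q * |γ i| + |β i| * (η i - s)) * g s) +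
  Real.Gamma (2 - σ) * Real.Gamma (2 - ν) * (|Δ₃ n η β γ| + 2 * |Δ₂ n η β γ|) /
      (2 * |Δ₁ σ ν ξ n η α * Δ₂ n η β γ|) *
    ((∫ s in (0:ℝ)..ξ, (ξ - s) ^ (q - σ - 1) / Real.Gamma (q - σ) * g s) +
     ∑ i ∈ Finset.Icc 1 n, |α i| *
        ∫ s in (0:ℝ)..η i, (η i - s) ^ (q - ν - 1) / Real.Gamma (q - ν) * g s)

open Set Filter Topology Function

section FixedPoint

variable {φ : ℝ → ℝ}

lemma tendsto_zero_of_le_comp {d : ℕ → ℝ} (hd0 : ∀ k, 0 ≤ d k) (hanti : Antitone d)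
    (hd : ∀ k, d (k + 1) ≤ φ (d k)) (hφc : ContinuousOn φ (Ici 0)) (hφ : ∀ r, 0 < r → φ r < r) :
    Tendsto d atTop (𝓝 0) := by
  have hlim := tendsto_atTop_ciInf hanti ⟨0, by rintro _ ⟨k, rfl⟩; exact hd0 k⟩
  set L := ⨅ k, d k
  have hL0 : 0 ≤ L := le_ciInf hd0
  have hLφ : L ≤ φ L := by
    have hφd : Tendsto (fun k => φ (d k)) atTop (𝓝 (φ L)) :=
      (hφc L hL0).tendsto.comp (tendsto_nhdsWithin_iff.2 ⟨hlim, Eventually.of_forall hd0⟩)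
    exact le_of_tendsto_of_tendsto ((tendsto_add_atTop_iff_nat 1).2 hlim) hφd
      (Eventually.of_forall hd)
  have hL : L = 0 := by
    by_contra hL
    exact (hLφ.trans_lt (hφ L (hL0.lt_of_ne' hL))).false
  rwa [hL] at hlim

variable {X : Type*} [MetricSpace X] {T : X → X}

lemma dist_le_of_dist_le_comp (hφ : ∀ r, 0 < r → φ r < r)
    (hT : ∀ x y, dist (T x) (T y) ≤ φ (dist x y)) (x y : X) : dist (T x) (T y) ≤ dist x y := by
  rcases eq_or_ne x y with rfl | hxy
  · simp
  · exact (hT x y).trans (hφ _ (dist_pos.2 hxy)).le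

lemma cauchySeq_iterate_of_dist_le_comp (hφm : MonotoneOn φ (Ici 0))
    (hφc : ContinuousOn φ (Ici 0)) (hφ : ∀ r, 0 < r → φ r < r)
    (hT : ∀ x y, dist (T x) (T y) ≤ φ (dist x y)) (x₀ : X) :
    CauchySeq fun k => T^[k] x₀ := by
  set u := fun k => T^[k] x₀
  have hu : ∀ k, u (k + 1) = T (u k) := fun k => iterate_succ_apply' T k x₀
  have hd : Tendsto (fun k => dist (u k) (u (k + 1))) atTop (𝓝 0) := by
    refine tendsto_zero_of_le_comp (fun _ => dist_nonneg) (antitone_nat_of_succ_le fun k => ?_)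
      (fun k => ?_) hφc hφ
    · simpa only [hu] using dist_le_of_dist_le_comp hφ hT (u k) (u (k + 1))
    · simpa only [hu] using hT (u k) (u (k + 1))
  rw [Metric.cauchySeq_iff']
  intro ε hε
  -- once consecutive steps are shorter than `δ`, the orbit stays in the closed `ε / 2`-ball
  set δ := ε / 2 - φ (ε / 2)
  have hδ : 0 < δ := sub_pos.2 (hφ _ (half_pos hε))
  obtain ⟨N, hN⟩ := (Metric.tendsto_atTop.1 hd) δ hδ
  have hstep : dist (u (N + 1)) (u N) < δ := by
    simpa [dist_comm (u N), abs_of_nonneg dist_nonneg] using hN N le_rfl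
  have hball : ∀ k, dist (u (N + k)) (u N) ≤ ε / 2 := by
    intro k
    induction k with
    | zero => simpa using (half_pos hε).le
    | succ k ih =>
      calc dist (u (N + k + 1)) (u N)
          ≤ dist (T (u (N + k))) (T (u N)) + dist (u (N + 1)) (u N) := by
            rw [hu, ← hu N]; exact dist_triangle _ _ _
        _ ≤ φ (ε / 2) + δ :=
            add_le_add ((hT _ _).trans (hφm dist_nonneg (half_pos hε).le ih)) hstep.le
        _ = ε / 2 := by ring
  refine ⟨N, fun m hm => ?_⟩
  obtain ⟨k, rfl⟩ := Nat.exists_eq_add_of_le hm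
  exact (hball k).trans_lt (half_lt_self hε)

theorem existsUnique_isFixedPt_of_dist_le_comp [CompleteSpace X] [Nonempty X]
    (hφm : MonotoneOn φ (Ici 0)) (hφc : ContinuousOn φ (Ici 0)) (hφ : ∀ r, 0 < r → φ r < r)
    (hT : ∀ x y, dist (T x) (T y) ≤ φ (dist x y)) :
    ∃! x, IsFixedPt T x := by
  obtain ⟨x₀⟩ := ‹Nonempty X›
  obtain ⟨z, hz⟩ :=
    cauchySeq_tendsto_of_complete (cauchySeq_iterate_of_dist_le_comp hφm hφc hφ hT x₀)
  have hTcont : Continuous T :=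
    (LipschitzWith.of_dist_le_mul (K := 1) fun x y => by
      simpa using dist_le_of_dist_le_comp hφ hT x y).continuous
  have hzfix : IsFixedPt T z := isFixedPt_of_tendsto_iterate hz hTcont.continuousAt
  refine ⟨z, hzfix, fun w hw => ?_⟩
  by_contra hne
  have hwz := hT w z
  rw [hw.eq, hzfix.eq] at hwz
  exact (hwz.trans_lt (hφ _ (dist_pos.2 hne))).false

lemma log_one_add_lt_self {r : ℝ} (hr : 0 < r) : Real.log (1 + r) < r := by
  linarith [Real.log_lt_sub_one_of_pos (by linarith : (0 : ℝ) < 1 + r) (by linarith)]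

theorem existsUnique_isFixedPt_of_dist_le_log_one_add [CompleteSpace X] [Nonempty X]
    (hT : ∀ x y, dist (T x) (T y) ≤ Real.log (1 + dist x y)) :
    ∃! x, IsFixedPt T x :=
  existsUnique_isFixedPt_of_dist_le_comp
    (fun a ha b _ hab => Real.log_le_log (by linarith [mem_Ici.1 ha]) (by linarith))
    (ContinuousOn.log (by fun_prop) fun r hr => by linarith [mem_Ici.1 hr])
    (fun _ => log_one_add_lt_self) hT

end FixedPoint

section KernelIntegrals

lemma intervalIntegrable_rpow_sub_div_mul {c p : ℝ} {h : ℝ → ℝ} (hp : -1 < p) (D : ℝ)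
    (hh : ContinuousOn h (uIcc 0 c)) :
    IntervalIntegrable (fun s => (c - s) ^ p / D * h s) volume 0 c := by
  have := ((intervalIntegrable_rpow' hp (a := c) (b := 0)).comp_sub_left c).div_const D
  simp only [sub_zero, sub_self] at this
  exact this.mul_continuousOn hh

variable {c p D : ℝ} {g h : ℝ → ℝ}

lemma abs_integral_rpow_sub_div_mul_le {K : ℝ} (hc : 0 ≤ c) (hp : -1 < p) (hD : 0 ≤ D)
    (hg : ContinuousOn g (Icc 0 c)) (hh : ∀ s ∈ Icc 0 c, |h s| ≤ K * g s) :
    |∫ s in 0..c, (c - s) ^ p / D * h s| ≤ K * ∫ s in 0..c, (c - s) ^ p / D * g s := by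
  rw [← intervalIntegral.integral_const_mul, ← Real.norm_eq_abs]
  refine norm_integral_le_of_norm_le hc (ae_of_all _ fun s hs => ?_)
    ((intervalIntegrable_rpow_sub_div_mul hp D (by rwa [uIcc_of_le hc])).const_mul K)
  have hk : 0 ≤ (c - s) ^ p / D := by have := hs.2; positivity
  rw [Real.norm_eq_abs, abs_mul, abs_of_nonneg hk, mul_left_comm]
  exact mul_le_mul_of_nonneg_left (hh s (Ioc_subset_Icc_self hs)) hk

lemma integral_rpow_sub_div_mul_mono {t u : ℝ} (ht : 0 ≤ t) (htu : t ≤ u) (hp : 0 ≤ p)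
    (hD : 0 ≤ D) (hg : ContinuousOn g (Icc 0 u)) (hg0 : ∀ s ∈ Icc 0 u, 0 ≤ g s) :
    ∫ s in 0..t, (t - s) ^ p / D * g s ≤ ∫ s in 0..u, (u - s) ^ p / D * g s := by
  have hu := intervalIntegrable_rpow_sub_div_mul (c := u) (p := p) (by linarith) D
    (by rwa [uIcc_of_le (ht.trans htu)])
  have hu₁ := hu.mono_set (by rw [uIcc_of_le ht, uIcc_of_le (ht.trans htu)]; gcongr)
  have hu₂ := hu.mono_set (by rw [uIcc_of_le htu, uIcc_of_le (ht.trans htu)]; gcongr)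
  rw [← integral_add_adjacent_intervals hu₁ hu₂]
  refine le_add_of_le_of_nonneg (integral_mono_on ht ?_ hu₁ fun s hs => ?_)
    (integral_nonneg htu fun s hs => ?_)
  · exact intervalIntegrable_rpow_sub_div_mul (by linarith) D
      (hg.mono (by rw [uIcc_of_le ht]; gcongr))
  · have : 0 ≤ g s := hg0 s ⟨hs.1, hs.2.trans htu⟩
    have : 0 ≤ t - s := sub_nonneg.2 hs.2
    gcongr
  · have : 0 ≤ g s := hg0 s ⟨ht.trans hs.1, hs.2⟩
    have : 0 ≤ u - s := sub_nonneg.2 hs.2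
    positivity

lemma continuousOn_integral_sub_mul {k F : ℝ → ℝ} {a b : ℝ} (hk : Continuous k)
    (hF : ContinuousOn F (Icc a b)) :
    ContinuousOn (fun t => ∫ s in a..t, k (t - s) * F s) (Icc a b) := by
  rcases lt_or_ge b a with hba | hab
  · simp [Icc_eq_empty_of_lt hba]
  set F' := fun s => F (projIcc a b hab s)
  have hF' : Continuous F' :=
    hF.comp_continuous (continuous_subtype_val.comp continuous_projIcc)
      fun s => (projIcc a b hab s).2
  have hG : Continuous fun t => ∫ s in a..t, k (t - s) * F' s :=
    (continuous_parametric_primitive_of_continuous (f := fun t s => k (t - s) * F' s)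
      ((hk.comp (continuous_fst.sub continuous_snd)).mul (hF'.comp continuous_snd))).comp
      (continuous_id.prodMk continuous_id)
  refine hG.continuousOn.congr fun t ht => integral_congr fun s hs => ?_
  rw [uIcc_of_le ht.1] at hs
  simp only [F', projIcc_of_mem hab ⟨hs.1, hs.2.trans ht.2⟩]

lemma integral_rpow_sub_mul_add {q a b : ℝ} (hc : 0 ≤ c) (hq : 0 < q)
    (hg : ContinuousOn g (Icc 0 c)) :
    ∫ s in 0..c, (c - s) ^ (q - 1) / Real.Gamma (q + 1) * (q * a + b * (c - s)) * g s =
      a * (∫ s in 0..c, (c - s) ^ (q - 1) / Real.Gamma q * g s) +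
        b * ∫ s in 0..c, (c - s) ^ q / Real.Gamma (q + 1) * g s := by
  have hg' : ContinuousOn g (uIcc 0 c) := by rwa [uIcc_of_le hc]
  rw [← intervalIntegral.integral_const_mul, ← intervalIntegral.integral_const_mul,
    ← integral_add ((intervalIntegrable_rpow_sub_div_mul (by linarith) _ hg').const_mul _)
      ((intervalIntegrable_rpow_sub_div_mul (by linarith) _ hg').const_mul _)]
  refine integral_congr fun s hs => ?_
  rw [uIcc_of_le hc] at hs
  have hpow : (c - s) ^ q = (c - s) ^ (q - 1) * (c - s) := by
    conv_lhs => rw [← sub_add_cancel q 1]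
    rw [Real.rpow_add' (sub_nonneg.2 hs.2) (by simpa using hq.ne'), Real.rpow_one]
  have hΓ : Real.Gamma q ≠ 0 := (Real.Gamma_pos_of_pos hq).ne'
  simp only [hpow, Real.Gamma_add_one hq.ne']
  field_simp

end KernelIntegrals

lemma abs_sum_mul_le_mul_sum {s : Finset ℕ} {a x y : ℕ → ℝ} {K : ℝ}
    (hxy : ∀ i ∈ s, |x i| ≤ K * y i) :
    |∑ i ∈ s, a i * x i| ≤ K * ∑ i ∈ s, |a i| * y i := by
  rw [Finset.mul_sum]
  refine (Finset.abs_sum_le_sum_abs _ _).trans (Finset.sum_le_sum fun i hi => ?_)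
  rw [abs_mul, mul_left_comm]
  exact mul_le_mul_of_nonneg_left (hxy i hi) (abs_nonneg _)

lemma abs_add_mul_add_mul_le {a b c u w A B C U W : ℝ} (ha : |a| ≤ A) (hb : |b| ≤ B)
    (hc : |c| ≤ C) (hu : |u| ≤ U) (hw : |w| ≤ W) :
    |a + u * b + w * c| ≤ A + U * B + W * C := by
  refine (abs_add_three _ _ _).trans ?_
  rw [abs_mul, abs_mul]
  exact add_le_add_three ha (mul_le_mul hu hb (abs_nonneg _) ((abs_nonneg _).trans hu))
    (mul_le_mul hw hc (abs_nonneg _) ((abs_nonneg _).trans hw))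

lemma abs_mul_affine_div_le_s5 {G D₁ D₂ D₃ t : ℝ} (hG : 0 ≤ G) (ht : t ∈ Icc 0 1) :
    |G * (D₃ + 2 * D₂ * t) / (2 * D₁ * D₂)| ≤ G * (|D₃| + 2 * |D₂|) / (2 * |D₁ * D₂|) := by
  rw [abs_div, abs_mul G, abs_of_nonneg hG, mul_assoc 2 D₁ D₂, abs_mul 2, abs_two]
  gcongr
  calc |D₃ + 2 * D₂ * t| ≤ |D₃| + 2 * |D₂| * t := by
        simpa [abs_mul, abs_of_nonneg ht.1] using abs_add_le D₃ (2 * D₂ * t)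
    _ ≤ |D₃| + 2 * |D₂| := by nlinarith [abs_nonneg D₂, ht.2]

lemma continuousOn_comp_IccExtend {f : ℝ → ℝ → ℝ} {a b : ℝ} (hab : a ≤ b)
    (hf : ContinuousOn (uncurry f) (Icc a b ×ˢ univ)) (x : C(Icc a b, ℝ)) :
    ContinuousOn (fun s => f s (IccExtend hab x s)) (Icc a b) :=
  hf.comp (continuousOn_id.prodMk x.continuous.Icc_extend'.continuousOn)
    fun _ hs => ⟨hs, mem_univ _⟩

section LinearProblem

variable (q σ ν ξ : ℝ) (n : ℕ) (η α β γ : ℕ → ℝ)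

/-- `opA f x = opL (fun s => f s (x s))` by `rfl`: `opL h` solves the linear problem with
right-hand side `h`. -/
noncomputable def opL (h : ℝ → ℝ) : ℝ → ℝ :=
  opA q σ ν ξ n η α β γ (fun s _ => h s) 0

variable {q σ ν ξ n η α β γ}

lemma continuousOn_opL (hq : 1 ≤ q) {h : ℝ → ℝ} (hh : ContinuousOn h (Icc 0 1)) :
    ContinuousOn (opL q σ ν ξ n η α β γ h) (Icc 0 1) := by
  have hk : Continuous fun u : ℝ => u ^ (q - 1) / Real.Gamma q :=
    (Real.continuous_rpow_const (by linarith)).div_const _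
  refine ((continuousOn_integral_sub_mul hk hh).add continuousOn_const).add
    (Continuous.continuousOn ?_)
  fun_prop

lemma opL_sub (hq : 0 < q) (hσ : σ < q) (hν : ν < q) (hξ : ξ ∈ Icc 0 1)
    (hη : ∀ i ∈ Finset.Icc 1 n, η i ∈ Icc 0 1) {F G : ℝ → ℝ} (hF : ContinuousOn F (Icc 0 1))
    (hG : ContinuousOn G (Icc 0 1)) {t : ℝ} (ht : t ∈ Icc 0 1) :
    opL q σ ν ξ n η α β γ F t - opL q σ ν ξ n η α β γ G t =
      opL q σ ν ξ n η α β γ (fun s => F s - G s) t := by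
  have hsub : ∀ c ∈ Icc (0 : ℝ) 1, ∀ p D : ℝ, -1 < p →
      ∫ s in 0..c, (c - s) ^ p / D * (F s - G s) =
        (∫ s in 0..c, (c - s) ^ p / D * F s) - ∫ s in 0..c, (c - s) ^ p / D * G s := by
    intro c hc p D hp
    have hc' : uIcc 0 c ⊆ Icc 0 1 := by
      rw [uIcc_of_le hc.1]; exact Icc_subset_Icc_right hc.2
    simp only [mul_sub]
    exact integral_sub (intervalIntegrable_rpow_sub_div_mul hp D (hF.mono hc'))
      (intervalIntegrable_rpow_sub_div_mul hp D (hG.mono hc'))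
  have hsum : ∀ (a : ℕ → ℝ) (p D : ℝ), -1 < p →
      ∑ i ∈ Finset.Icc 1 n, a i * ∫ s in 0..η i, (η i - s) ^ p / D * (F s - G s) =
        (∑ i ∈ Finset.Icc 1 n, a i * ∫ s in 0..η i, (η i - s) ^ p / D * F s) -
          ∑ i ∈ Finset.Icc 1 n, a i * ∫ s in 0..η i, (η i - s) ^ p / D * G s := by
    intro a p D hp
    rw [← Finset.sum_sub_distrib]
    exact Finset.sum_congr rfl fun i hi => by rw [hsub (η i) (hη i hi) p D hp, mul_sub]
  simp only [opL, opA]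
  rw [hsub t ht _ _ (by linarith), hsub 1 (right_mem_Icc.2 zero_le_one) _ _ (by linarith),
    hsub ξ hξ _ _ (by linarith), hsum β _ _ (by linarith), hsum γ _ _ (by linarith),
    hsum α _ _ (by linarith)]
  ring

lemma Φ_eq (hq : 0 < q) (hη : ∀ i ∈ Finset.Icc 1 n, η i ∈ Icc 0 1) {g : ℝ → ℝ}
    (hg : ContinuousOn g (Icc 0 1)) :
    Φ q σ ν ξ n η α β γ g =
      (1 + 1 / |Δ₂ n η β γ|) * (∫ s in 0..1, (1 - s) ^ (q - 1) / Real.Gamma q * g s) +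
      1 / |Δ₂ n η β γ| *
        ((∑ i ∈ Finset.Icc 1 n, |β i| *
            ∫ s in 0..η i, (η i - s) ^ q / Real.Gamma (q + 1) * g s) +
          ∑ i ∈ Finset.Icc 1 n, |γ i| *
            ∫ s in 0..η i, (η i - s) ^ (q - 1) / Real.Gamma q * g s) +
      Real.Gamma (2 - σ) * Real.Gamma (2 - ν) * (|Δ₃ n η β γ| + 2 * |Δ₂ n η β γ|) /
          (2 * |Δ₁ σ ν ξ n η α * Δ₂ n η β γ|) *
        ((∫ s in 0..ξ, (ξ - s) ^ (q - σ - 1) / Real.Gamma (q - σ) * g s) +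
          ∑ i ∈ Finset.Icc 1 n, |α i| *
            ∫ s in 0..η i, (η i - s) ^ (q - ν - 1) / Real.Gamma (q - ν) * g s) := by
  rw [Φ, Finset.sum_congr rfl fun i hi => integral_rpow_sub_mul_add (hη i hi).1 hq
    (hg.mono (Icc_subset_Icc_right (hη i hi).2)), Finset.sum_add_distrib, add_comm (∑ i ∈ _, _)]

lemma abs_opL_le (hq : 1 < q) (hσ : σ ≤ 1) (hν : ν ≤ 1) (hξ : ξ ∈ Icc 0 1)
    (hη : ∀ i ∈ Finset.Icc 1 n, η i ∈ Icc 0 1) {g h : ℝ → ℝ} (hg : ContinuousOn g (Icc 0 1))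
    (hg0 : ∀ s ∈ Icc 0 1, 0 ≤ g s) {K : ℝ} (hK : 0 ≤ K) (hh : ∀ s ∈ Icc 0 1, |h s| ≤ K * g s)
    {t : ℝ} (ht : t ∈ Icc 0 1) :
    |opL q σ ν ξ n η α β γ h t| ≤ K * Φ q σ ν ξ n η α β γ g := by
  have hΓ : ∀ x, 0 < x → 0 ≤ Real.Gamma x := fun x hx => (Real.Gamma_pos_of_pos hx).le
  have hI : ∀ c ∈ Icc (0 : ℝ) 1, ∀ p D : ℝ, -1 < p → 0 ≤ D →
      |∫ s in 0..c, (c - s) ^ p / D * h s| ≤ K * ∫ s in 0..c, (c - s) ^ p / D * g s :=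
    fun c hc p D hp hD => abs_integral_rpow_sub_div_mul_le hc.1 hp hD
      (hg.mono (Icc_subset_Icc_right hc.2)) fun s hs => hh s ⟨hs.1, hs.2.trans hc.2⟩
  have hsum : ∀ (a : ℕ → ℝ) (p D : ℝ), -1 < p → 0 ≤ D →
      |∑ i ∈ Finset.Icc 1 n, a i * ∫ s in 0..η i, (η i - s) ^ p / D * h s| ≤
        K * ∑ i ∈ Finset.Icc 1 n, |a i| * ∫ s in 0..η i, (η i - s) ^ p / D * g s :=
    fun a p D hp hD => abs_sum_mul_le_mul_sum fun i hi => hI (η i) (hη i hi) p D hp hD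
  have h₁ := hI 1 (right_mem_Icc.2 zero_le_one) (q - 1) _ (by linarith) (hΓ q (by linarith))
  -- the Volterra term is dominated by its value at `t = 1` because `g ≥ 0`
  have hA := (hI t ht (q - 1) _ (by linarith) (hΓ q (by linarith))).trans
    (mul_le_mul_of_nonneg_left (integral_rpow_sub_div_mul_mono ht.1 ht.2 (by linarith)
      (hΓ q (by linarith)) hg hg0) hK)
  have hB := (abs_add_three _ _ _).trans (add_le_add_three ((abs_neg _).trans_le h₁)
    (hsum β q _ (by linarith) (hΓ (q + 1) (by linarith)))
    (hsum γ (q - 1) _ (by linarith) (hΓ q (by linarith))))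
  have hC := (abs_add_le _ _).trans (add_le_add
    ((abs_neg _).trans_le (hI ξ hξ (q - σ - 1) _ (by linarith) (hΓ (q - σ) (by linarith))))
    (hsum α (q - ν - 1) _ (by linarith) (hΓ (q - ν) (by linarith))))
  have hW := abs_mul_affine_div_le_s5 (D₁ := Δ₁ σ ν ξ n η α) (D₂ := Δ₂ n η β γ) (D₃ := Δ₃ n η β γ)
    (mul_nonneg (hΓ (2 - σ) (by linarith)) (hΓ (2 - ν) (by linarith))) ht
  refine (abs_add_mul_add_mul_le hA hB hC (abs_one_div _).le hW).trans_eq ?_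
  rw [Φ_eq (by linarith) hη hg]
  ring

lemma dist_opA_le (hq : 1 < q) (hσ : σ ≤ 1) (hν : ν ≤ 1) (hξ : ξ ∈ Icc 0 1)
    (hη : ∀ i ∈ Finset.Icc 1 n, η i ∈ Icc 0 1) {f : ℝ → ℝ → ℝ}
    (hf : ContinuousOn (uncurry f) (Icc 0 1 ×ˢ univ)) {g : ℝ → ℝ}
    (hg : ContinuousOn g (Icc 0 1)) (hg0 : ∀ s ∈ Icc 0 1, 0 ≤ g s)
    (hΦ : 0 < Φ q σ ν ξ n η α β γ g)
    (hfg : ∀ s ∈ Icc (0 : ℝ) 1, ∀ u v : ℝ,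
      |f s u - f s v| ≤ g s * (Φ q σ ν ξ n η α β γ g)⁻¹ * Real.log (1 + |u - v|))
    (x y : C(Icc (0 : ℝ) 1, ℝ)) {t : ℝ} (ht : t ∈ Icc 0 1) :
    dist (opA q σ ν ξ n η α β γ f (IccExtend zero_le_one x) t)
      (opA q σ ν ξ n η α β γ f (IccExtend zero_le_one y) t) ≤ Real.log (1 + dist x y) := by
  set X := IccExtend zero_le_one x
  set Y := IccExtend zero_le_one y
  set K := (Φ q σ ν ξ n η α β γ g)⁻¹ * Real.log (1 + dist x y)
  have hK : 0 ≤ K :=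
    mul_nonneg (inv_nonneg.2 hΦ.le) (Real.log_nonneg (le_add_of_nonneg_right dist_nonneg))
  have hXY : ∀ s ∈ Icc (0 : ℝ) 1, |f s (X s) - f s (Y s)| ≤ K * g s := fun s hs => by
    have := hg0 s hs
    calc _ ≤ g s * (Φ q σ ν ξ n η α β γ g)⁻¹ * Real.log (1 + |X s - Y s|) := hfg s hs _ _
      _ ≤ g s * (Φ q σ ν ξ n η α β γ g)⁻¹ * Real.log (1 + dist x y) := by
        gcongr
        exact x.dist_apply_le_dist (g := y) (projIcc 0 1 zero_le_one s)
      _ = K * g s := by ring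
  calc _ = |opL q σ ν ξ n η α β γ (fun s => f s (X s) - f s (Y s)) t| := by
        rw [Real.dist_eq, ← opL_sub (by linarith) (by linarith) (by linarith) hξ hη
          (continuousOn_comp_IccExtend _ hf x) (continuousOn_comp_IccExtend _ hf y) ht]
        rfl
    _ ≤ K * Φ q σ ν ξ n η α β γ g := abs_opL_le hq hσ hν hξ hη hg hg0 hK hXY ht
    _ = Real.log (1 + dist x y) := by simp only [K]; field_simp

end LinearProblem

lemma monotoneOn_Icc_of_le_succ {α : Type*} [Preorder α] {f : ℕ → α} {a b : ℕ}
    (hf : ∀ i, a ≤ i → i < b → f i ≤ f (i + 1)) : MonotoneOn f (Icc a b) := by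
  intro i hi j hj hij
  induction j, hij using Nat.le_induction with
  | base => exact le_rfl
  | succ j hij ih =>
    exact (ih ⟨hi.1.trans hij, Nat.le_of_succ_le hj.2⟩).trans
      (hf j (hi.1.trans hij) (Nat.lt_of_succ_le hj.2))

theorem thm32_general (q σ ν ξ : ℝ) (n : ℕ) (η α β γ : ℕ → ℝ)
    (hq1 : 1 < q) (hσ1 : σ ≤ 1) (hν1 : ν ≤ 1)
    (hn : 1 ≤ n) (hξ : 0 < ξ) (hξη : ξ < η 1)
    (hηmono : ∀ i, 1 ≤ i → i < n → η i < η (i + 1)) (hηn : η n < 1)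
    (f : ℝ → ℝ → ℝ)
    (hf : ContinuousOn (Function.uncurry f) (Set.Icc 0 1 ×ˢ Set.univ))
    (g : ℝ → ℝ) (hg : ContinuousOn g (Set.Icc 0 1))
    (hgpos : ∀ t ∈ Set.Icc (0:ℝ) 1, 0 ≤ g t)
    (hΦ : 0 < Φ q σ ν ξ n η α β γ g)
    (hH2 : ∀ t ∈ Set.Icc (0:ℝ) 1, ∀ x y : ℝ,
      |f t x - f t y| ≤ g t * (Φ q σ ν ξ n η α β γ g)⁻¹ * Real.log (1 + |x - y|)) :
    ∃! x : C(Set.Icc (0:ℝ) 1, ℝ), ∀ t : Set.Icc (0:ℝ) 1,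
      x t = opA q σ ν ξ n η α β γ f (Set.IccExtend zero_le_one ⇑x) ↑t := by
  have hη : ∀ i ∈ Finset.Icc 1 n, η i ∈ Icc 0 1 := fun i hi => by
    have hi := Finset.mem_Icc.1 hi
    have hmono := monotoneOn_Icc_of_le_succ fun i h₁ h₂ => (hηmono i h₁ h₂).le
    exact ⟨by linarith [hmono ⟨le_rfl, hn⟩ hi hi.1], by linarith [hmono hi ⟨hn, le_rfl⟩ hi.2]⟩
  have hξ1 : ξ ∈ Icc 0 1 := ⟨hξ.le, by linarith [(hη 1 (Finset.mem_Icc.2 ⟨le_rfl, hn⟩)).2]⟩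
  let T : C(Icc (0 : ℝ) 1, ℝ) → C(Icc (0 : ℝ) 1, ℝ) := fun x =>
    ⟨(Icc 0 1).domRestrict (opA q σ ν ξ n η α β γ f (IccExtend zero_le_one x)),
      continuousOn_iff_continuous_domRestrict.1
        (continuousOn_opL hq1.le (continuousOn_comp_IccExtend _ hf x))⟩
  have hfix : ∀ x, IsFixedPt T x ↔
      ∀ t : Icc (0 : ℝ) 1, x t = opA q σ ν ξ n η α β γ f (IccExtend zero_le_one x) t :=
    fun x => ContinuousMap.ext_iff.trans (forall_congr' fun t => eq_comm)
  refine (existsUnique_congr hfix).1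
    (existsUnique_isFixedPt_of_dist_le_log_one_add fun x y => ?_)
  exact (ContinuousMap.dist_le (Real.log_nonneg (le_add_of_nonneg_right dist_nonneg))).2 fun t =>
    dist_opA_le hq1 hσ1 hν1 hξ1 hη hf hg hgpos hΦ hH2 x y t.2

theorem thm32 (q σ ν ξ : ℝ) (n : ℕ) (η α β γ : ℕ → ℝ)
    (hq1 : 1 < q) (hq2 : q ≤ 2) (hσ0 : 0 < σ) (hσ1 : σ ≤ 1) (hν0 : 0 < ν) (hν1 : ν ≤ 1)
    (hn : 1 ≤ n) (hξ : 0 < ξ) (hξη : ξ < η 1)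
    (hηmono : ∀ i, 1 ≤ i → i < n → η i < η (i + 1)) (hηn : η n < 1)
    (hΔ₁ : Δ₁ σ ν ξ n η α ≠ 0) (hΔ₂ : Δ₂ n η β γ ≠ 0)
    (f : ℝ → ℝ → ℝ)
    (hf : ContinuousOn (Function.uncurry f) (Set.Icc 0 1 ×ˢ Set.univ))
    (g : ℝ → ℝ) (hg : ContinuousOn g (Set.Icc 0 1))
    (hgpos : ∀ t ∈ Set.Icc (0:ℝ) 1, 0 ≤ g t)
    (hΦ : 0 < Φ q σ ν ξ n η α β γ g)
    (hH2 : ∀ t ∈ Set.Icc (0:ℝ) 1, ∀ x y : ℝ,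
      |f t x - f t y| ≤ g t * (Φ q σ ν ξ n η α β γ g)⁻¹ * Real.log (1 + |x - y|)) :
    ∃! x : C(Set.Icc (0:ℝ) 1, ℝ), ∀ t : Set.Icc (0:ℝ) 1,
      x t = opA q σ ν ξ n η α β γ f (Set.IccExtend zero_le_one ⇑x) ↑t :=
  thm32_general q σ ν ξ n η α β γ hq1 hσ1 hν1 hn hξ hξη hηmono hηn f hf g hg hgpos hΦ hH2
end
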